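/- arXiv:1304.0974 — 2 statements merged into one kernel-verified Lean document; each statement's English description precedes it below -/
import Mathlib

section
/- The determinant of the W-transformation matrix X_s is strictly positive for every s ≥ 1; consequently the real s-th root d_s = (det X_s)^{1/s} is well-defined and positive. -/
/-!
Laplace expansion of `X_{n+2}` along its last row and then along the last column of the minor
meets a single nonzero entry each time (`ξ_{n+1}` and `-ξ_{n+1}`), so
`det X_{n+2} = ξ_{n+1}² det X_n`. Starting from `det X_0 = 1` and `det X_1 = 1/2`, all
determinants are positive, and so is every real power of them.
-/

open Matrix

/-- `ξ_i = 1/(2√(4i²-1))`. -/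
noncomputable def xi (i : ℕ) : ℝ := 1 / (2 * Real.sqrt (4 * (i : ℝ) ^ 2 - 1))

/-- The tridiagonal W-transformation matrix `X_s` (0-based indexing). -/
noncomputable def Xmat (s : ℕ) : Matrix (Fin s) (Fin s) ℝ :=
  Matrix.of fun i j =>
    if (i : ℕ) = 0 ∧ (j : ℕ) = 0 then 1 / 2
    else if (j : ℕ) = (i : ℕ) + 1 then -xi ((i : ℕ) + 1)
    else if (i : ℕ) = (j : ℕ) + 1 then xi ((j : ℕ) + 1)
    else 0

namespace Matrix

variable {R : Type*} [CommRing R] {n : ℕ}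

theorem det_succ_row_of_eq_single (A : Matrix (Fin (n + 1)) (Fin (n + 1)) R) {i j : Fin (n + 1)}
    (h : ∀ k, k ≠ j → A i k = 0) :
    A.det = (-1) ^ (i + j : ℕ) * A i j * (A.submatrix i.succAbove j.succAbove).det := by
  rw [det_succ_row A i, Finset.sum_eq_single j (fun k _ hk => by simp [h k hk]) (by simp)]

theorem det_succ_column_of_eq_single (A : Matrix (Fin (n + 1)) (Fin (n + 1)) R)
    {i j : Fin (n + 1)} (h : ∀ k, k ≠ i → A k j = 0) :
    A.det = (-1) ^ (i + j : ℕ) * A i j * (A.submatrix i.succAbove j.succAbove).det := by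
  rw [det_succ_column A j, Finset.sum_eq_single i (fun k _ hk => by simp [h k hk]) (by simp)]

end Matrix

theorem xi_pos {k : ℕ} (hk : k ≠ 0) : 0 < xi k := by
  have hk : (1 : ℝ) ≤ k := by exact_mod_cast Nat.one_le_iff_ne_zero.mpr hk
  have : 0 < Real.sqrt (4 * (k : ℝ) ^ 2 - 1) := Real.sqrt_pos.mpr (by nlinarith)
  unfold xi
  positivity

theorem Xmat_submatrix_castLE {m n : ℕ} (h : n ≤ m) :
    (Xmat m).submatrix (Fin.castLE h) (Fin.castLE h) = Xmat n := by
  ext i j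
  simp [Xmat]

theorem Xmat_det_add_two (n : ℕ) : (Xmat (n + 2)).det = xi (n + 1) ^ 2 * (Xmat n).det := by
  have hrow : Fin.castSucc ∘ Fin.castSucc = Fin.castLE (Nat.le_add_right n 2) := by
    ext; simp
  have hcol : (Fin.last n).castSucc.succAbove ∘ Fin.castSucc = Fin.castSucc ∘ Fin.castSucc := by
    ext; simp [Fin.succAbove]
  have hlast : (Fin.last n).castSucc.succAbove (Fin.last n) = Fin.last (n + 1) := by
    simp [Fin.succAbove]
  have hsub : Xmat (n + 2) (Fin.last (n + 1)) (Fin.last n).castSucc = xi (n + 1) := by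
    simp [Xmat]; omega
  have hsuper : Xmat (n + 2) (Fin.last n).castSucc (Fin.last (n + 1)) = -xi (n + 1) := by
    simp [Xmat]
  rw [det_succ_row_of_eq_single (i := Fin.last (n + 1)) (j := (Fin.last n).castSucc),
    det_succ_column_of_eq_single (i := Fin.last n) (j := Fin.last n), submatrix_submatrix,
    Fin.succAbove_last, Fin.succAbove_last, hcol, hrow, Xmat_submatrix_castLE]
  · simp only [submatrix_apply, hlast, hsub, hsuper, Fin.val_last, Fin.val_castSucc]
    ring_nf
    rw [Even.neg_one_pow ⟨2 * n, by ring⟩, mul_one]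
  all_goals
    intro k hk
    have hkn : (k : ℕ) ≠ n := fun h => hk (Fin.ext h)
    have := k.isLt
    simp [Xmat, Fin.succAbove, hkn.symm, show (k : ℕ) ≠ n + 2 by omega]

theorem Xmat_det_pos : ∀ s : ℕ, 0 < (Xmat s).det
  | 0 => by simp
  | 1 => by simp [Xmat]
  | n + 2 => by
    rw [Xmat_det_add_two]
    have := xi_pos n.succ_ne_zero
    have := Xmat_det_pos n
    positivity

theorem stmt5_general (s : ℕ) :
    0 < (Xmat s).det ∧ 0 < Real.rpow (Xmat s).det (1 / (s : ℝ)) :=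
  ⟨Xmat_det_pos s, Real.rpow_pos_of_pos (Xmat_det_pos s) _⟩

/-- `det(X_s) > 0` for every `s ≥ 1`; consequently the real `s`-th root
`d_s = (det X_s)^{1/s}` is well defined and positive. -/
theorem stmt5 (s : ℕ) (hs : 1 ≤ s) :
    0 < (Xmat s).det ∧ 0 < Real.rpow (Xmat s).det (1 / (s : ℝ)) :=
  stmt5_general s
end

section
/- Let σ be the polynomial of degree s defined by σ(ch) = y₀ + h Σ_{j=0}^{s-1} γ_j ∫₀^c P_j(x)dx where γ_j = ∫₀¹ J∇H(σ(τh))P_j(τ)dτ, and suppose H is a polynomial so that these integrals make sense with σ a polynomial. Then H(σ(h)) = H(y₀), i.e., the HBVM polynomial approximation exactly conserves the Hamiltonian when the integrals γ_j are computed exactly. -/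
open Matrix

/-!
By the chain rule,
`H (σ h) - H y₀ = h ∫₀¹ ⟪∇H(σ(ch)), ∑ⱼ Pⱼ(c) γⱼ⟫ dc = h ∑ⱼ ⟪vⱼ, γⱼ⟫`
with `vⱼ = ∫₀¹ Pⱼ(τ) ∇H(σ(τh)) dτ`. Since the `γⱼ` are computed exactly, `γⱼ = J vⱼ`,
and every `⟪vⱼ, J vⱼ⟫` vanishes because `J` is skew-adjoint.
-/
section
variable {E : Type*} [NormedAddCommGroup E] [InnerProductSpace ℝ E] [CompleteSpace E]

theorem ContDiff.continuous_gradient {H : E → ℝ} (hH : ContDiff ℝ 1 H) :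
    Continuous (gradient H) :=
  (InnerProductSpace.toDual ℝ E).symm.continuous.comp (hH.continuous_fderiv one_ne_zero)

theorem ContinuousLinearMap.inner_apply_self_eq_zero_of_mem_skewAdjoint {A : E →L[ℝ] E}
    (hA : A ∈ skewAdjoint (E →L[ℝ] E)) (x : E) : inner ℝ (A x) x = 0 := by
  have hadj : ContinuousLinearMap.adjoint A = -A := skewAdjoint.mem_iff.1 hA
  have h := ContinuousLinearMap.adjoint_inner_left A x x
  rw [hadj, _root_.neg_apply, inner_neg_left, real_inner_comm x] at h
  rw [real_inner_comm]
  linarith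

theorem sub_eq_integral_inner_gradient {H : E → ℝ} (hH : ContDiff ℝ 1 H) {F F' : ℝ → E}
    (hF : ∀ c, HasDerivAt F (F' c) c) (hF' : Continuous F') (a b : ℝ) :
    H (F b) - H (F a) = ∫ c in a..b, inner ℝ (gradient H (F c)) (F' c) := by
  have hFc : Continuous F := continuous_iff_continuousAt.2 fun c => (hF c).continuousAt
  have hHF : ∀ c, HasDerivAt (fun c => H (F c)) (inner ℝ (gradient H (F c)) (F' c)) c :=
      fun c => by
    have hgrad : HasGradientAt H (gradient H (F c)) (F c) :=
      ((hH.differentiable one_ne_zero) (F c)).hasGradientAt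
    simpa only [Function.comp_def, InnerProductSpace.toDual_apply_apply]
      using hgrad.hasFDerivAt.comp_hasDerivAt c (hF c)
  exact (intervalIntegral.integral_eq_sub_of_hasDerivAt (fun c _ => hHF c)
    (((hH.continuous_gradient.comp hFc).inner hF').intervalIntegrable a b)).symm

variable {ι : Type*} (t : Finset ι) {φ : ι → ℝ → ℝ}

omit [CompleteSpace E] in
theorem hasDerivAt_sum_integral_smul (hφ : ∀ j, Continuous (φ j)) (γ : ι → E) (c : ℝ) :
    HasDerivAt (fun c => ∑ j ∈ t, (∫ x in (0:ℝ)..c, φ j x) • γ j)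
      (∑ j ∈ t, φ j c • γ j) c :=
  HasDerivAt.fun_sum fun j _ =>
    ((hφ j).integral_hasStrictDerivAt 0 c).hasDerivAt.smul_const (γ j)

theorem integral_inner_sum_smul {G : ℝ → E} (hG : Continuous G) (hφ : ∀ j, Continuous (φ j))
    (γ : ι → E) (a b : ℝ) :
    ∫ c in a..b, inner ℝ (G c) (∑ j ∈ t, φ j c • γ j) =
      ∑ j ∈ t, inner ℝ (∫ c in a..b, φ j c • G c) (γ j) := by
  simp only [inner_sum, inner_smul_right]
  rw [intervalIntegral.integral_finsetSum (f := fun j c => φ j c * inner ℝ (G c) (γ j))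
    fun j _ => ((hφ j).mul (hG.inner continuous_const)).intervalIntegrable a b]
  refine Finset.sum_congr rfl fun j _ => ?_
  have hφG : IntervalIntegrable (fun c => φ j c • G c) MeasureTheory.volume a b :=
    ((hφ j).smul hG).intervalIntegrable a b
  calc ∫ c in a..b, φ j c * inner ℝ (G c) (γ j)
      = ∫ c in a..b, inner ℝ (γ j) (φ j c • G c) := by
        simp only [inner_smul_right, real_inner_comm (γ j)]
    _ = inner ℝ (γ j) (∫ c in a..b, φ j c • G c) :=
        (innerSL ℝ (γ j)).intervalIntegral_comp_comm hφG
    _ = inner ℝ (∫ c in a..b, φ j c • G c) (γ j) := real_inner_comm _ _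

theorem hamiltonian_conserved_of_mem_skewAdjoint {H : E → ℝ} (hH : ContDiff ℝ 1 H)
    {A : E →L[ℝ] E} (hA : A ∈ skewAdjoint (E →L[ℝ] E)) (hφ : ∀ j, Continuous (φ j))
    (h : ℝ) (y₀ : E) (γ : ι → E) (F : ℝ → E)
    (hF : ∀ c, F c = y₀ + h • ∑ j ∈ t, (∫ x in (0:ℝ)..c, φ j x) • γ j)
    (hγ : ∀ j ∈ t, γ j = ∫ τ in (0:ℝ)..1, φ j τ • A (gradient H (F τ))) :
    H (F 1) = H (F 0) := by
  have hF' : ∀ c, HasDerivAt F (h • ∑ j ∈ t, φ j c • γ j) c := fun c => by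
    rw [funext hF]
    exact ((hasDerivAt_sum_integral_smul t hφ γ c).const_smul h).const_add y₀
  have hF'c : Continuous fun c => h • ∑ j ∈ t, φ j c • γ j :=
    (continuous_finsetSum _ fun j _ => (hφ j).smul continuous_const).const_smul h
  have hG : Continuous fun c => gradient H (F c) :=
    hH.continuous_gradient.comp (continuous_iff_continuousAt.2 fun c => (hF' c).continuousAt)
  set v : ι → E := fun j => ∫ τ in (0:ℝ)..1, φ j τ • gradient H (F τ)
  have hγv : ∀ j ∈ t, γ j = A (v j) := fun j hj => by
    simp only [hγ j hj, v, ← A.map_smul]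
    exact A.intervalIntegral_comp_comm (((hφ j).smul hG).intervalIntegrable 0 1)
  rw [← sub_eq_zero, sub_eq_integral_inner_gradient hH hF' hF'c]
  simp only [inner_smul_right]
  rw [intervalIntegral.integral_const_mul, integral_inner_sum_smul t hG hφ]
  refine mul_eq_zero_of_right h (Finset.sum_eq_zero fun j hj => ?_)
  rw [hγv j hj, real_inner_comm]
  exact A.inner_apply_self_eq_zero_of_mem_skewAdjoint hA (v j)
end

theorem skewAdjoint.map_mem {F R S : Type*} [AddCommGroup R] [StarAddMonoid R] [AddCommGroup S]
    [StarAddMonoid S] [FunLike F R S] [AddMonoidHomClass F R S] [StarHomClass F R S] (f : F)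
    {x : R} (hx : x ∈ skewAdjoint R) : f x ∈ skewAdjoint S := by
  rw [skewAdjoint.mem_iff, ← map_star, skewAdjoint.mem_iff.1 hx, map_neg]

theorem Matrix.fromBlocks_zero_one_neg_one_zero_mem_skewAdjoint (l R : Type*) [DecidableEq l]
    [CommRing R] [StarRing R] [TrivialStar R] :
    fromBlocks 0 1 (-1) 0 ∈ skewAdjoint (Matrix (l ⊕ l) (l ⊕ l) R) := by
  have hJ : (fromBlocks 0 1 (-1) 0 : Matrix (l ⊕ l) (l ⊕ l) R) = -J l R := by
    simp [J, fromBlocks_neg]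
  rw [hJ, skewAdjoint.mem_iff, star_neg, star_eq_conjTranspose,
    conjTranspose_eq_transpose_of_trivial, J_transpose]

theorem stmt15_general (m s : ℕ) (H : EuclideanSpace ℝ (Fin m ⊕ Fin m) → ℝ)
    (hH : ContDiff ℝ 1 H)
    (J : Matrix (Fin m ⊕ Fin m) (Fin m ⊕ Fin m) ℝ)
    (hJ : J = Matrix.fromBlocks 0 1 (-1) 0)
    (P : ℕ → Polynomial ℝ)
    (h : ℝ) (y₀ : EuclideanSpace ℝ (Fin m ⊕ Fin m))
    (γ : ℕ → EuclideanSpace ℝ (Fin m ⊕ Fin m))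
    (σ : ℝ → EuclideanSpace ℝ (Fin m ⊕ Fin m))
    (hσ : ∀ c : ℝ, σ (c * h) = y₀ + h • ∑ j ∈ Finset.range s,
      (∫ x in (0:ℝ)..c, (P j).eval x) • γ j)
    (hγ : ∀ j < s, γ j = ∫ τ in (0:ℝ)..1,
      (P j).eval τ • Matrix.toEuclideanLin J (gradient H (σ (τ * h)))) :
    H (σ h) = H y₀ := by
  have hJskew : toEuclideanCLM (𝕜 := ℝ) J ∈ skewAdjoint _ :=
    skewAdjoint.map_mem _ (hJ ▸ fromBlocks_zero_one_neg_one_zero_mem_skewAdjoint _ _)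
  have hσ0 : σ (0 * h) = y₀ := by simpa using hσ 0
  rw [← one_mul h, ← hσ0]
  exact hamiltonian_conserved_of_mem_skewAdjoint (Finset.range s) hH hJskew
    (fun j => (P j).continuous) h y₀ γ (fun c => σ (c * h)) hσ
    fun j hj => hγ j (Finset.mem_range.1 hj)

/-- The HBVM polynomial approximation
`σ(ch) = y₀ + h Σ_{j=0}^{s-1} γ_j ∫₀^c P_j(x) dx`, with
`γ_j = ∫₀¹ P_j(τ) J∇H(σ(τh)) dτ` computed exactly, exactly conserves the Hamiltonian:
`H(σ(h)) = H(y₀)`. -/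
theorem stmt15 (m s : ℕ) (H : EuclideanSpace ℝ (Fin m ⊕ Fin m) → ℝ)
    (hH : ContDiff ℝ 1 H)
    (J : Matrix (Fin m ⊕ Fin m) (Fin m ⊕ Fin m) ℝ)
    (hJ : J = Matrix.fromBlocks 0 1 (-1) 0)
    (P : ℕ → Polynomial ℝ)
    (hdeg : ∀ j : ℕ, (P j).degree = j)
    (horth : ∀ i j : ℕ,
      (∫ x in (0:ℝ)..1, (P i).eval x * (P j).eval x) = if i = j then 1 else 0)
    (h : ℝ) (y₀ : EuclideanSpace ℝ (Fin m ⊕ Fin m))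
    (γ : ℕ → EuclideanSpace ℝ (Fin m ⊕ Fin m))
    (σ : ℝ → EuclideanSpace ℝ (Fin m ⊕ Fin m))
    (hσ : ∀ c : ℝ, σ (c * h) = y₀ + h • ∑ j ∈ Finset.range s,
      (∫ x in (0:ℝ)..c, (P j).eval x) • γ j)
    (hγ : ∀ j < s, γ j = ∫ τ in (0:ℝ)..1,
      (P j).eval τ • Matrix.toEuclideanLin J (gradient H (σ (τ * h)))) :
    H (σ h) = H y₀ :=
  stmt15_general m s H hH J hJ P h y₀ γ σ hσ hγ
end
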